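/- arXiv:2302.03458 — 7 statements merged into one kernel-verified Lean document; each statement's English description precedes it below -/
import Mathlib

section
/- Let N = {1,…,n} be a finite set of buyers, g : 2^N → ℝ monotone submodular with g(∅) = 0, valuations v : N → ℝ with v_i > 0, and budgets B : N → [0,∞]. Define the greedy allocation x* recursively (along the strict total order k ≺ i ⟺ k ∈ H_i) by x*_i := min( B_i / v_i , min_{H ⊆ H_i} ( g(H ∪ {i}) − ∑_{k∈H} x*_k ) ), where B_i / v_i := ∞ if B_i = ∞. Then x* ∈ P(g), and x* maximizes liquid welfare over the polymatroid: for every x ∈ P(g), ∑_{i∈N} min(v_i x_i, B_i) ≤ ∑_{i∈N} min(v_i x*_i, B_i). (Proposition 2.1, first part.) -/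
open Finset ENNReal

section MyAux
variable {n : ℕ} (v : Fin n → ℝ) (H : Fin n → Finset (Fin n))
  (hH : ∀ i k, k ∈ H i ↔ (v i < v k ∨ (v k = v i ∧ k < i)))

include hH

lemma myaux_not_self : ∀ i, i ∉ H i := by
  intro i h
  rcases (hH i i).mp h with h' | ⟨_, h'⟩ <;> exact absurd h' (by simp)

lemma myaux_le_of_mem {i k : Fin n} (h : k ∈ H i) : v i ≤ v k := by
  rcases (hH i k).mp h with h' | ⟨h', _⟩ <;> linarith [h'.le]

lemma myaux_asymm {i k : Fin n} (h1 : k ∈ H i) (h2 : i ∈ H k) : False := by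
  rcases (hH i k).mp h1 with h | ⟨h, h'⟩ <;> rcases (hH k i).mp h2 with h2' | ⟨h2', h2''⟩
  · linarith
  · linarith
  · linarith
  · exact absurd (h'.trans h2'') (lt_irrefl _)

lemma myaux_extract {S : Finset (Fin n)} (hS : S.Nonempty) :
    ∃ i ∈ S, ∀ k ∈ S, k ≠ i → k ∈ H i := by
  obtain ⟨a, haS, hamin⟩ := S.exists_min_image v hS
  have hFne : (S.filter (fun k => v k = v a)).Nonempty := ⟨a, by simp [haS]⟩
  set i := (S.filter (fun k => v k = v a)).max' hFne with hi
  have hiF : i ∈ S.filter (fun k => v k = v a) := Finset.max'_mem _ hFne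
  have hiS : i ∈ S := (Finset.mem_filter.mp hiF).1
  have hvi : v i = v a := (Finset.mem_filter.mp hiF).2
  refine ⟨i, hiS, fun k hk hne => ?_⟩
  rw [hH]
  rcases eq_or_lt_of_le (hamin k hk) with heq | hlt
  · right
    have hkF : k ∈ S.filter (fun k => v k = v a) := Finset.mem_filter.mpr ⟨hk, heq.symm⟩
    exact ⟨by rw [hvi, heq], lt_of_le_of_ne (Finset.le_max' _ _ hkF) hne⟩
  · left; rw [hvi]; exact hlt

end MyAux

section MyMain
variable {n : ℕ} (g : Finset (Fin n) → ℝ)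
    (hmono : ∀ S T : Finset (Fin n), S ⊆ T → g S ≤ g T)
    (hsub : ∀ S T : Finset (Fin n), g (S ∩ T) + g (S ∪ T) ≤ g S + g T)
    (hempty : g ∅ = 0)
    (v : Fin n → ℝ) (hv : ∀ i, 0 < v i)
    (B : Fin n → ℝ≥0∞)
    (H : Fin n → Finset (Fin n))
    (hH : ∀ i k, k ∈ H i ↔ (v i < v k ∨ (v k = v i ∧ k < i)))
    (xstar : Fin n → ℝ)
    (hrec : ∀ i, xstar i =
      if B i = ⊤ then
        (H i).powerset.inf' (Finset.powerset_nonempty _)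
          (fun Hs => g (insert i Hs) - ∑ k ∈ Hs, xstar k)
      else
        min ((B i).toReal / v i)
          ((H i).powerset.inf' (Finset.powerset_nonempty _)
            (fun Hs => g (insert i Hs) - ∑ k ∈ Hs, xstar k)))

include hempty hH hrec in
lemma myaux_feas (S : Finset (Fin n)) : ∑ k ∈ S, xstar k ≤ g S := by
  rcases S.eq_empty_or_nonempty with rfl | hS
  · simp [hempty]
  obtain ⟨i, hiS, hmax⟩ := myaux_extract v H hH hS
  have hsub' : S.erase i ⊆ H i := fun k hk =>
    hmax k (Finset.mem_of_mem_erase hk) (Finset.ne_of_mem_erase hk)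
  have key : ((H i).powerset.inf' (Finset.powerset_nonempty _)
        (fun Hs => g (insert i Hs) - ∑ k ∈ Hs, xstar k)) ≤
      g (insert i (S.erase i)) - ∑ k ∈ S.erase i, xstar k :=
    Finset.inf'_le _ (Finset.mem_powerset.mpr hsub')
  have h1 : xstar i ≤ g (insert i (S.erase i)) - ∑ k ∈ S.erase i, xstar k := by
    rw [hrec i]; split_ifs
    · exact key
    · exact (min_le_right _ _).trans key
  rw [Finset.insert_erase hiS] at h1
  calc ∑ k ∈ S, xstar k = xstar i + ∑ k ∈ S.erase i, xstar k :=
        (Finset.add_sum_erase _ _ hiS).symm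
    _ ≤ g S := by linarith

include hmono hempty hv hH hrec in
lemma myaux_nonneg : ∀ i, 0 ≤ xstar i := by
  intro i
  have hinf : 0 ≤ (H i).powerset.inf' (Finset.powerset_nonempty _)
      (fun Hs => g (insert i Hs) - ∑ k ∈ Hs, xstar k) := by
    apply Finset.le_inf'
    intro Hs hHs
    have h1 : ∑ k ∈ Hs, xstar k ≤ g Hs := myaux_feas (hempty := hempty) (hH := hH) (hrec := hrec) (S := Hs)
    have h2 : g Hs ≤ g (insert i Hs) := hmono _ _ (Finset.subset_insert _ _)
    show (0:ℝ) ≤ g (insert i Hs) - ∑ k ∈ Hs, xstar k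
    linarith
  rw [hrec i]; split_ifs
  · exact hinf
  · exact le_min (div_nonneg ENNReal.toReal_nonneg (hv i).le) hinf

include hv hrec in
lemma myaux_cap : ∀ i, B i ≠ ⊤ → v i * xstar i ≤ (B i).toReal := by
  intro i hBi
  have h : xstar i ≤ (B i).toReal / v i := by
    rw [hrec i]; rw [if_neg hBi]; exact min_le_left _ _
  rw [mul_comm]
  exact (le_div_iff₀ (hv i)).mp h

include hrec in
lemma myaux_cases : ∀ i, (B i ≠ ⊤ ∧ xstar i = (B i).toReal / v i) ∨
    ∃ H0 ∈ (H i).powerset, xstar i = g (insert i H0) - ∑ k ∈ H0, xstar k := by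
  intro i
  have h := hrec i
  obtain ⟨H0, hH0, hval⟩ := Finset.exists_mem_eq_inf' (Finset.powerset_nonempty (H i))
      (fun Hs => g (insert i Hs) - ∑ k ∈ Hs, xstar k)
  split_ifs at h with hBi
  · exact Or.inr ⟨H0, hH0, h.trans hval⟩
  · rcases le_total ((B i).toReal / v i)
        ((H i).powerset.inf' (Finset.powerset_nonempty _)
          (fun Hs => g (insert i Hs) - ∑ k ∈ Hs, xstar k)) with hle | hle
    · exact Or.inl ⟨hBi, h.trans (min_eq_left hle)⟩
    · exact Or.inr ⟨H0, hH0, (h.trans (min_eq_right hle)).trans hval⟩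

include hsub hempty hv hH hrec in
lemma myaux_tight : ∀ P : Finset (Fin n), (∀ j ∈ P, H j ⊆ P) →
    ∃ T ⊆ P, (∀ k ∈ P, k ∉ T → B k ≠ ⊤) ∧
      g T + ∑ k ∈ P \ T, (B k).toReal / v k ≤ ∑ k ∈ P, xstar k := by
  intro P
  induction P using Finset.strongInduction with
  | _ P ih =>
  intro hP
  rcases P.eq_empty_or_nonempty with rfl | hPne
  · exact ⟨∅, Finset.Subset.refl _, by simp, by simp [hempty]⟩
  obtain ⟨i, hiP, hmax⟩ := myaux_extract v H hH hPne
  have hni : i ∉ H i := myaux_not_self v H hH i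
  set P' := P.erase i with hP'def
  have hssub : P' ⊂ P := Finset.erase_ssubset hiP
  have hHiP' : H i ⊆ P' := fun k hk =>
    Finset.mem_erase.mpr ⟨fun h => hni (h ▸ hk), hP i hiP hk⟩
  have hP'pre : ∀ j ∈ P', H j ⊆ P' := by
    intro j hj k hk
    have hjP := Finset.mem_of_mem_erase hj
    refine Finset.mem_erase.mpr ⟨?_, hP j hjP hk⟩
    rintro rfl
    exact myaux_asymm v H hH (hmax j hjP (Finset.ne_of_mem_erase hj)) hk
  obtain ⟨T, hTP', hTtop, hTle⟩ := ih P' hssub hP'pre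
  have hiT : i ∉ T := fun h => (Finset.mem_erase.mp (hTP' h)).1 rfl
  have hiP' : i ∉ P' := Finset.notMem_erase i P
  have hsumP : ∑ k ∈ P, xstar k = xstar i + ∑ k ∈ P', xstar k :=
    (Finset.add_sum_erase _ _ hiP).symm
  rcases myaux_cases g (v := v) (B := B) (H := H) xstar hrec i with ⟨hBi, hxi⟩ | ⟨H0, hH0p, hxi⟩
  · refine ⟨T, hTP'.trans (Finset.erase_subset _ _), ?_, ?_⟩
    · intro k hkP hkT
      by_cases hki : k = i
      · subst hki; exact hBi
      · exact hTtop k (Finset.mem_erase.mpr ⟨hki, hkP⟩) hkT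
    · have hPT : P \ T = insert i (P' \ T) := by
        ext k
        simp only [Finset.mem_sdiff, Finset.mem_insert, hP'def, Finset.mem_erase]
        constructor
        · rintro ⟨hkP, hkT⟩
          by_cases h : k = i
          · exact Or.inl h
          · exact Or.inr ⟨⟨h, hkP⟩, hkT⟩
        · rintro (rfl | ⟨⟨_, hkP⟩, hkT⟩)
          · exact ⟨hiP, hiT⟩
          · exact ⟨hkP, hkT⟩
      rw [hPT, Finset.sum_insert (fun h => hiP' (Finset.mem_sdiff.mp h).1), hsumP]
      linarith
  · have hH0 : H0 ⊆ H i := Finset.mem_powerset.mp hH0p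
    have hiH0 : i ∉ H0 := fun h => hni (hH0 h)
    set T' := insert i (T ∪ H0) with hT'def
    have hT'P : T' ⊆ P := Finset.insert_subset hiP
      ((Finset.union_subset hTP' (hH0.trans hHiP')).trans (Finset.erase_subset _ _))
    refine ⟨T', hT'P, ?_, ?_⟩
    · intro k hkP hkT'
      have hki : k ≠ i := by rintro rfl; exact hkT' (Finset.mem_insert_self _ _)
      have hkT : k ∉ T := fun h =>
        hkT' (Finset.mem_insert_of_mem (Finset.mem_union_left _ h))
      exact hTtop k (Finset.mem_erase.mpr ⟨hki, hkP⟩) hkT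
    · have hsubm := hsub T (insert i H0)
      have e1 : T ∪ insert i H0 = T' := by rw [Finset.union_insert]
      have e2 : T ∩ insert i H0 = T ∩ H0 := by
        ext k
        simp only [Finset.mem_inter, Finset.mem_insert]
        constructor
        · rintro ⟨hkT, rfl | hk⟩
          · exact absurd hkT hiT
          · exact ⟨hkT, hk⟩
        · rintro ⟨hkT, hk⟩
          exact ⟨hkT, Or.inr hk⟩
      rw [e1, e2] at hsubm
      have hfeasTH0 : ∑ k ∈ T ∩ H0, xstar k ≤ g (T ∩ H0) :=
        myaux_feas (hempty := hempty) (hH := hH) (hrec := hrec) (S := T ∩ H0)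
      have hsplit1 : ∑ k ∈ H0 ∩ T, xstar k + ∑ k ∈ H0 \ T, xstar k
          = ∑ k ∈ H0, xstar k := Finset.sum_inter_add_sum_sdiff H0 T _
      rw [Finset.inter_comm] at hsplit1
      have hH0P'T : H0 \ T ⊆ P' \ T :=
        Finset.sdiff_subset_sdiff (hH0.trans hHiP') (Finset.Subset.refl _)
      have hcapsplit : ∑ k ∈ (P' \ T) \ (H0 \ T), (B k).toReal / v k
          + ∑ k ∈ H0 \ T, (B k).toReal / v k
          = ∑ k ∈ P' \ T, (B k).toReal / v k := Finset.sum_sdiff hH0P'T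
      have e3 : (P' \ T) \ (H0 \ T) = P \ T' := by
        ext k
        simp only [Finset.mem_sdiff, hP'def, Finset.mem_erase, hT'def,
          Finset.mem_insert, Finset.mem_union]
        tauto
      rw [e3] at hcapsplit
      have hcapge : ∑ k ∈ H0 \ T, xstar k ≤ ∑ k ∈ H0 \ T, (B k).toReal / v k := by
        apply Finset.sum_le_sum
        intro k hk
        have hk' := hH0P'T hk
        have hB : B k ≠ ⊤ := hTtop k (Finset.mem_sdiff.mp hk').1 (Finset.mem_sdiff.mp hk').2
        have := myaux_cap (g := g) (v := v) (hv := hv) (B := B) (H := H) (xstar := xstar) (hrec := hrec) k hB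
        rw [le_div_iff₀ (hv k), mul_comm]
        exact this
      rw [hsumP]
      linarith

include hsub hempty hv hH hrec in
lemma myaux_dom (y : Fin n → ℝ) (hy : ∀ S : Finset (Fin n), ∑ k ∈ S, y k ≤ g S)
    (hycap : ∀ k, B k ≠ ⊤ → y k ≤ (B k).toReal / v k)
    (P : Finset (Fin n)) (hP : ∀ j ∈ P, H j ⊆ P) :
    ∑ k ∈ P, y k ≤ ∑ k ∈ P, xstar k := by
  obtain ⟨T, hTP, hTtop, hTle⟩ := myaux_tight (g := g) (hsub := hsub) (hempty := hempty)
    (v := v) (hv := hv) (B := B) (H := H) (hH := hH) (xstar := xstar) (hrec := hrec) P hP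
  have h1 : ∑ k ∈ P \ T, y k + ∑ k ∈ T, y k = ∑ k ∈ P, y k := Finset.sum_sdiff hTP
  have h2 : ∑ k ∈ T, y k ≤ g T := hy T
  have h3 : ∑ k ∈ P \ T, y k ≤ ∑ k ∈ P \ T, (B k).toReal / v k :=
    Finset.sum_le_sum fun k hk =>
      hycap k (hTtop k (Finset.mem_sdiff.mp hk).1 (Finset.mem_sdiff.mp hk).2)
  linarith

include hsub hempty hv hH hrec in
lemma myaux_weighted (y : Fin n → ℝ) (hy : ∀ S : Finset (Fin n), ∑ k ∈ S, y k ≤ g S)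
    (hycap : ∀ k, B k ≠ ⊤ → y k ≤ (B k).toReal / v k) :
    ∀ P : Finset (Fin n), (∀ j ∈ P, H j ⊆ P) → ∀ c : ℝ, 0 ≤ c → (∀ k ∈ P, c ≤ v k) →
    ∑ k ∈ P, v k * (y k - xstar k) ≤ c * ∑ k ∈ P, (y k - xstar k) := by
  intro P
  induction P using Finset.strongInduction with
  | _ P ih =>
  intro hP c hc hcv
  rcases P.eq_empty_or_nonempty with rfl | hPne
  · simp
  obtain ⟨j, hjP, hmax⟩ := myaux_extract v H hH hPne
  set P' := P.erase j with hP'def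
  have hssub : P' ⊂ P := Finset.erase_ssubset hjP
  have hP'pre : ∀ i ∈ P', H i ⊆ P' := by
    intro i hi k hk
    have hiP := Finset.mem_of_mem_erase hi
    refine Finset.mem_erase.mpr ⟨?_, hP i hiP hk⟩
    rintro rfl
    exact myaux_asymm v H hH (hmax i hiP (Finset.ne_of_mem_erase hi)) hk
  have hvj : ∀ k ∈ P', v j ≤ v k := fun k hk =>
    myaux_le_of_mem v H hH (hmax k (Finset.mem_of_mem_erase hk) (Finset.ne_of_mem_erase hk))
  have hIH := ih P' hssub hP'pre (v j) (hv j).le hvj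
  have hzP : ∑ k ∈ P, (y k - xstar k) ≤ 0 := by
    have := myaux_dom (g := g) (hsub := hsub) (hempty := hempty) (v := v) (hv := hv)
      (B := B) (H := H) (hH := hH) (xstar := xstar) (hrec := hrec) y hy hycap P hP
    rw [Finset.sum_sub_distrib]
    linarith
  have hsum1 : ∑ k ∈ P, v k * (y k - xstar k)
      = v j * (y j - xstar j) + ∑ k ∈ P', v k * (y k - xstar k) :=
    (Finset.add_sum_erase _ _ hjP).symm
  have hsum2 : ∑ k ∈ P, (y k - xstar k)
      = (y j - xstar j) + ∑ k ∈ P', (y k - xstar k) :=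
    (Finset.add_sum_erase _ _ hjP).symm
  have hcj : c ≤ v j := hcv j hjP
  nlinarith [hzP, hcj, hIH, hsum1, hsum2]

include hmono hsub hempty hv hH hrec in
theorem final_part3 :
    (∀ x : Fin n → ℝ, (∀ i, 0 ≤ x i) →
      (∀ S : Finset (Fin n), ∑ i ∈ S, x i ≤ g S) →
      ∑ i, (min (ENNReal.ofReal (v i * x i)) (B i)).toReal ≤
        ∑ i, (min (ENNReal.ofReal (v i * xstar i)) (B i)).toReal) := by
  have hnn := myaux_nonneg (g := g) (hmono := hmono) (hempty := hempty) (v := v) (hv := hv)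
    (B := B) (H := H) (hH := hH) (xstar := xstar) (hrec := hrec)
  have hcap := myaux_cap (g := g) (v := v) (hv := hv) (B := B) (H := H)
    (xstar := xstar) (hrec := hrec)
  intro x hx hxfeas
  set y : Fin n → ℝ := fun i => if B i = ⊤ then x i else min (x i) ((B i).toReal / v i)
    with hydef
  have hyx : ∀ i, y i ≤ x i := by
    intro i; simp only [hydef]; split_ifs
    · exact le_refl _
    · exact min_le_left _ _
  have hyfeas : ∀ S : Finset (Fin n), ∑ k ∈ S, y k ≤ g S := fun S =>
    le_trans (Finset.sum_le_sum fun k _ => hyx k) (hxfeas S)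
  have hycap : ∀ k, B k ≠ ⊤ → y k ≤ (B k).toReal / v k := by
    intro k hk; simp only [hydef]; rw [if_neg hk]; exact min_le_right _ _
  -- LW(x) term ≤ v i * y i
  have hLWx : ∀ i, (min (ENNReal.ofReal (v i * x i)) (B i)).toReal ≤ v i * y i := by
    intro i
    by_cases hBi : B i = ⊤
    · rw [hBi, min_eq_left le_top,
        ENNReal.toReal_ofReal (mul_nonneg (hv i).le (hx i))]
      simp only [hydef, if_pos hBi, le_refl]
    · rw [ENNReal.toReal_min ENNReal.ofReal_ne_top hBi,
        ENNReal.toReal_ofReal (mul_nonneg (hv i).le (hx i))]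
      have hmul : v i * y i = min (v i * x i) (v i * ((B i).toReal / v i)) := by
        simp only [hydef, if_neg hBi]
        rcases le_total (x i) ((B i).toReal / v i) with h | h
        · rw [min_eq_left h, min_eq_left (mul_le_mul_of_nonneg_left h (hv i).le)]
        · rw [min_eq_right h, min_eq_right (mul_le_mul_of_nonneg_left h (hv i).le)]
      have hcan : v i * ((B i).toReal / v i) = (B i).toReal := by
        rw [mul_comm, div_mul_cancel₀ _ (ne_of_gt (hv i))]
      rw [hmul, hcan]
  -- LW(xstar) term = v i * xstar i
  have hLWs : ∀ i, (min (ENNReal.ofReal (v i * xstar i)) (B i)).toReal = v i * xstar i := by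
    intro i
    by_cases hBi : B i = ⊤
    · rw [hBi, min_eq_left le_top,
        ENNReal.toReal_ofReal (mul_nonneg (hv i).le (hnn i))]
    · rw [min_eq_left (ENNReal.ofReal_le_of_le_toReal (hcap i hBi)),
        ENNReal.toReal_ofReal (mul_nonneg (hv i).le (hnn i))]
  have hkey : ∑ i, v i * (y i - xstar i) ≤ 0 := by
    have := myaux_weighted (g := g) (hsub := hsub) (hempty := hempty) (v := v) (hv := hv)
      (B := B) (H := H) (hH := hH) (xstar := xstar) (hrec := hrec) y hyfeas hycap
      Finset.univ (fun j _ => Finset.subset_univ _) 0 (le_refl 0) (fun k _ => (hv k).le)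
    simpa using this
  calc ∑ i, (min (ENNReal.ofReal (v i * x i)) (B i)).toReal
      ≤ ∑ i, v i * y i := Finset.sum_le_sum fun i _ => hLWx i
    _ ≤ ∑ i, v i * xstar i := by
        have h1 : ∑ i, v i * (y i - xstar i)
            = ∑ i, v i * y i - ∑ i, v i * xstar i := by
          rw [← Finset.sum_sub_distrib]
          exact Finset.sum_congr rfl fun i _ => by ring
        linarith
    _ = ∑ i, (min (ENNReal.ofReal (v i * xstar i)) (B i)).toReal :=
        (Finset.sum_congr rfl fun i _ => (hLWs i)).symm

end MyMain

/-- **Proposition 2.1, first part.**  The greedy allocation `xstar`, defined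
recursively along the strict order `k ∈ H i` by
`xstar i = min (B i / v i) (min_{H ⊆ H i} (g (H ∪ {i}) − xstar(H)))`
(with `B i / v i = ∞` when `B i = ∞`), lies in the polymatroid `P(g)` and
maximizes liquid welfare `∑ i, min (v i * x i) (B i)` over `P(g)`. -/
theorem greedy_allocation_maximizes_liquid_welfare
    {n : ℕ} (g : Finset (Fin n) → ℝ)
    (hmono : ∀ S T : Finset (Fin n), S ⊆ T → g S ≤ g T)
    (hsub : ∀ S T : Finset (Fin n), g (S ∩ T) + g (S ∪ T) ≤ g S + g T)
    (hempty : g ∅ = 0)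
    (v : Fin n → ℝ) (hv : ∀ i, 0 < v i)
    (B : Fin n → ℝ≥0∞)
    (H : Fin n → Finset (Fin n))
    (hH : ∀ i k, k ∈ H i ↔ (v i < v k ∨ (v k = v i ∧ k < i)))
    (xstar : Fin n → ℝ)
    (hrec : ∀ i, xstar i =
      if B i = ⊤ then
        (H i).powerset.inf' (Finset.powerset_nonempty _)
          (fun Hs => g (insert i Hs) - ∑ k ∈ Hs, xstar k)
      else
        min ((B i).toReal / v i)
          ((H i).powerset.inf' (Finset.powerset_nonempty _)
            (fun Hs => g (insert i Hs) - ∑ k ∈ Hs, xstar k))) :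
    (∀ i, 0 ≤ xstar i) ∧
    (∀ S : Finset (Fin n), ∑ i ∈ S, xstar i ≤ g S) ∧
    (∀ x : Fin n → ℝ, (∀ i, 0 ≤ x i) →
      (∀ S : Finset (Fin n), ∑ i ∈ S, x i ≤ g S) →
      ∑ i, (min (ENNReal.ofReal (v i * x i)) (B i)).toReal ≤
        ∑ i, (min (ENNReal.ofReal (v i * xstar i)) (B i)).toReal) := by
  refine ⟨myaux_nonneg (g := g) (hmono := hmono) (hempty := hempty) (v := v) (hv := hv)
      (B := B) (H := H) (hH := hH) (xstar := xstar) (hrec := hrec),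
    fun S => myaux_feas (g := g) (hempty := hempty) (v := v) (B := B) (H := H)
      (hH := hH) (xstar := xstar) (hrec := hrec) (S := S),
    final_part3 (g := g) (hmono := hmono) (hsub := hsub) (hempty := hempty) (v := v)
      (hv := hv) (B := B) (H := H) (hH := hH) (xstar := xstar) (hrec := hrec)⟩
end

section
/- Let N = {1,…,n} be a finite set of buyers, g : 2^N → ℝ monotone submodular with g(∅) = 0, valuations v : N → ℝ with v_i > 0, and budgets B : N → [0,∞]. Define the greedy allocation x* recursively (along the strict total order k ≺ i ⟺ k ∈ H_i) by x*_i := min( B_i / v_i , min_{H ⊆ H_i} ( g(H ∪ {i}) − ∑_{k∈H} x*_k ) ), where B_i / v_i := ∞ if B_i = ∞. Suppose there is a subset V ⊆ N with B_i = ∞ for every i ∈ V and g(V) = g(N). Then all goods are allocated: ∑_{i∈N} x*_i = g(N). (Proposition 2.1, second part; in the paper V is the set of virtual buyers, one per seller, so that g(V) = g(N) and B_i = ∞ on V.) -/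
/-!
Every greedy value `x i` is at most `g (insert i s) - ∑ k ∈ s, x k` for all sets `s` of
buyers preceding `i`; adding the buyers of a set one at a time in the greedy order shows that
`x` is feasible, `∑ k ∈ S, x k ≤ g S`, and hence nonnegative. For feasible `x`, submodularity
makes the tight sets `∑ k ∈ S, x k = g S` closed under union. A buyer with infinite budget
attains the inner minimum at some `s`, so it lies in the tight set `insert i s`. The union of
these tight sets is a tight set `T ⊇ V`, and then
`g univ = g V ≤ g T = ∑ k ∈ T, x k ≤ ∑ k, x k ≤ g univ`.
-/

open Finset ENNReal

section Polymatroid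

variable {ι : Type*} {g : Finset ι → ℝ} {x : ι → ℝ}

def IsTight (g : Finset ι → ℝ) (x : ι → ℝ) (S : Finset ι) : Prop :=
  ∑ k ∈ S, x k = g S

theorem sum_le_of_le_sub_sum_of_key_lt [DecidableEq ι] {α : Type*} [LinearOrder α] (key : ι → α)
    (hkey : Function.Injective key) (hempty : g ∅ = 0)
    (hx : ∀ i s, (∀ k ∈ s, key k < key i) → x i ≤ g (insert i s) - ∑ k ∈ s, x k)
    (S : Finset ι) : ∑ k ∈ S, x k ≤ g S := by
  induction S using Finset.induction_on_max_value key with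
  | empty => simp [hempty]
  | insert i s hi hmax _ =>
    have hlt : ∀ k ∈ s, key k < key i := fun k hk =>
      (hmax k hk).lt_of_ne (hkey.ne (ne_of_mem_of_not_mem hk hi))
    rw [sum_insert hi]
    linarith [hx i s hlt]

theorem IsTight.union [DecidableEq ι] (hsub : ∀ S T : Finset ι, g (S ∩ T) + g (S ∪ T) ≤ g S + g T)
    (hfeas : ∀ S, ∑ k ∈ S, x k ≤ g S) {S T : Finset ι}
    (hS : IsTight g x S) (hT : IsTight g x T) : IsTight g x (S ∪ T) := by
  have hsum : ∑ k ∈ S ∪ T, x k + ∑ k ∈ S ∩ T, x k = ∑ k ∈ S, x k + ∑ k ∈ T, x k :=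
    sum_union_inter
  unfold IsTight at *
  linarith [hfeas (S ∩ T), hfeas (S ∪ T), hsub S T]

theorem exists_isTight_superset [DecidableEq ι] (hempty : g ∅ = 0)
    (hsub : ∀ S T : Finset ι, g (S ∩ T) + g (S ∪ T) ≤ g S + g T)
    (hfeas : ∀ S, ∑ k ∈ S, x k ≤ g S) (W : Finset ι)
    (hW : ∀ i ∈ W, ∃ T, i ∈ T ∧ IsTight g x T) : ∃ T, W ⊆ T ∧ IsTight g x T := by
  induction W using Finset.induction_on with
  | empty => exact ⟨∅, subset_rfl, by simp [IsTight, hempty]⟩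
  | insert i W _ ih =>
    obtain ⟨T, hWT, hT⟩ := ih fun k hk => hW k (mem_insert_of_mem hk)
    obtain ⟨Ti, hiTi, hTi⟩ := hW i (mem_insert_self i W)
    exact ⟨T ∪ Ti, insert_subset (mem_union_right T hiTi) (hWT.trans subset_union_left),
      hT.union hsub hfeas hTi⟩

theorem sum_univ_eq_of_isTight_superset [Fintype ι]
    (hmono : ∀ S T : Finset ι, S ⊆ T → g S ≤ g T) (hfeas : ∀ S, ∑ k ∈ S, x k ≤ g S)
    (hnonneg : ∀ i, 0 ≤ x i) {V T : Finset ι} (hVT : V ⊆ T) (hT : IsTight g x T)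
    (hgV : g V = g univ) : ∑ i, x i = g univ := by
  have hT_le : ∑ k ∈ T, x k ≤ ∑ i, x i :=
    sum_le_sum_of_subset_of_nonneg (subset_univ T) fun i _ _ => hnonneg i
  linarith [hmono V T hVT, hfeas univ, hT.symm]

end Polymatroid

section Greedy

variable {ι : Type*} [DecidableEq ι] {g : Finset ι → ℝ} {x : ι → ℝ} {H : Finset ι} {i : ι}

def greedyBound (g : Finset ι → ℝ) (x : ι → ℝ) (H : Finset ι) (i : ι) : ℝ :=
  H.powerset.inf' (powerset_nonempty _) fun s => g (insert i s) - ∑ k ∈ s, x k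

theorem greedyBound_le {s : Finset ι} (hs : s ⊆ H) :
    greedyBound g x H i ≤ g (insert i s) - ∑ k ∈ s, x k :=
  inf'_le _ (mem_powerset.2 hs)

theorem greedyBound_nonneg (hmono : ∀ S T : Finset ι, S ⊆ T → g S ≤ g T)
    (hfeas : ∀ S, ∑ k ∈ S, x k ≤ g S) : 0 ≤ greedyBound g x H i :=
  le_inf' _ _ fun s _ => by linarith [hfeas s, hmono s (insert i s) (subset_insert i s)]

theorem exists_isTight_of_eq_greedyBound (hi : i ∉ H) (hx : x i = greedyBound g x H i) :
    ∃ T, i ∈ T ∧ IsTight g x T := by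
  obtain ⟨s, hs, hmin⟩ := exists_mem_eq_inf' (powerset_nonempty H)
    fun s => g (insert i s) - ∑ k ∈ s, x k
  have his : i ∉ s := fun h => hi (mem_powerset.1 hs h)
  refine ⟨insert i s, mem_insert_self i s, ?_⟩
  rw [IsTight, sum_insert his, hx, greedyBound, hmin]
  ring

end Greedy

/-- **Proposition 2.1, second part.**  If `V ⊆ N` consists of buyers with
infinite budgets and `g V = g N`, then the greedy allocation `xstar`
allocates all the goods: `∑ i, xstar i = g N`. -/
theorem greedy_allocation_allocates_all_goods
    {n : ℕ} (g : Finset (Fin n) → ℝ)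
    (hmono : ∀ S T : Finset (Fin n), S ⊆ T → g S ≤ g T)
    (hsub : ∀ S T : Finset (Fin n), g (S ∩ T) + g (S ∪ T) ≤ g S + g T)
    (hempty : g ∅ = 0)
    (v : Fin n → ℝ) (hv : ∀ i, 0 < v i)
    (B : Fin n → ℝ≥0∞)
    (H : Fin n → Finset (Fin n))
    (hH : ∀ i k, k ∈ H i ↔ (v i < v k ∨ (v k = v i ∧ k < i)))
    (xstar : Fin n → ℝ)
    (hrec : ∀ i, xstar i =
      if B i = ⊤ then
        (H i).powerset.inf' (Finset.powerset_nonempty _)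
          (fun Hs => g (insert i Hs) - ∑ k ∈ Hs, xstar k)
      else
        min ((B i).toReal / v i)
          ((H i).powerset.inf' (Finset.powerset_nonempty _)
            (fun Hs => g (insert i Hs) - ∑ k ∈ Hs, xstar k)))
    (V : Finset (Fin n))
    (hV : ∀ i ∈ V, B i = ⊤)
    (hgV : g V = g Finset.univ) :
    ∑ i, xstar i = g Finset.univ := by
  have hrec' : ∀ i, xstar i = if B i = ⊤ then greedyBound g xstar (H i) i
      else min ((B i).toReal / v i) (greedyBound g xstar (H i) i) := hrec
  let key : Fin n → ℝ ×ₗ Fin n := fun i => toLex (-v i, i)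
  have hkey : Function.Injective key := fun a b hab => congrArg Prod.snd (toLex.injective hab)
  have hmemH : ∀ i k, k ∈ H i ↔ key k < key i := fun i k => by
    simp [key, hH, Prod.Lex.toLex_lt_toLex, eq_comm]
  have hbound : ∀ i, xstar i ≤ greedyBound g xstar (H i) i := fun i => by
    rw [hrec' i]; split_ifs <;> simp
  have hfeas := sum_le_of_le_sub_sum_of_key_lt key hkey hempty fun i s hs =>
    (hbound i).trans (greedyBound_le fun k hk => (hmemH i k).2 (hs k hk))
  have hnonneg : ∀ i, 0 ≤ xstar i := fun i => by
    have := greedyBound_nonneg (H := H i) (i := i) hmono hfeas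
    rw [hrec' i]; split_ifs
    exacts [this, le_min (div_nonneg toReal_nonneg (hv i).le) this]
  obtain ⟨T, hVT, hT⟩ := exists_isTight_superset hempty hsub hfeas V fun i hi =>
    exists_isTight_of_eq_greedyBound (fun h => ((hmemH i i).1 h).false)
      (by rw [hrec' i, if_pos (hV i hi)])
  exact sum_univ_eq_of_isTight_superset hmono hfeas hnonneg hVT hT hgV
end

section
/- Let N be a finite set, v : N → ℝ with v_i > 0, and x, y : N → ℝ≥0 with ∑_{i∈N} y_i = ∑_{i∈N} x_i. Suppose there exist a chain ∅ = X_0 ⊊ X_1 ⊊ ⋯ ⊊ X_t = N and elements i_k ∈ X_k \ X_{k−1} (k = 1,…,t) such that: (a) ∑_{i∈X_k} y_i ≥ ∑_{i∈X_k} x_i for every k; (b) v_i ≥ v_{i_k} for every k and every i ∈ X_k; (c) y_i ≥ x_i for every k and every i ∈ X_k \ (X_{k−1} ∪ {i_k}). Then ∑_{i∈N} v_i y_i ≥ ∑_{i∈N} v_i x_i. (This is the chain inequality underlying Theorem 3.9: with y = x^f the final allocation of the Polyhedral Clinching Auction, x = x* the liquid-welfare-optimal allocation, X_k the tight sets and i_k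 the dropped buyers from Proposition 3.10, it yields SW^PCA = ∑ v_i x^f_i ≥ ∑ v_i x*_i = LW^OPT. The proof is by induction on k via ∑_{i∈X_k} v_i (y_i − x_i) ≥ v_{i_k} ( ∑_{i∈X_k} y_i − ∑_{i∈X_k} x_i ).) -/
open Finset

/-- **Chain inequality underlying Theorem 3.9.**  Given a chain of tight sets
`∅ = X 0 ⊊ X 1 ⊊ ⋯ ⊊ X t = N` with dropped buyers `ik k ∈ X k \ X (k-1)`
such that (a) `y (X k) ≥ x (X k)`, (b) `v i ≥ v (ik k)` on `X k`, and
(c) `y i ≥ x i` on `X k \ (X (k-1) ∪ {ik k})`, and `∑ y = ∑ x`, one has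
`∑ i, v i * y i ≥ ∑ i, v i * x i`. -/
theorem chain_inequality_social_welfare
    {N : Type*} [Fintype N] [DecidableEq N]
    (v : N → ℝ) (hv : ∀ i, 0 < v i)
    (x y : N → ℝ) (hx : ∀ i, 0 ≤ x i) (hy : ∀ i, 0 ≤ y i)
    (hsum : ∑ i, y i = ∑ i, x i)
    (t : ℕ) (X : ℕ → Finset N) (ik : ℕ → N)
    (hX0 : X 0 = ∅) (hXt : X t = Finset.univ)
    (hchain : ∀ k, k < t → X k ⊂ X (k + 1))
    (hik : ∀ k, 1 ≤ k → k ≤ t → ik k ∈ X k \ X (k - 1))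
    (ha : ∀ k, k ≤ t → ∑ i ∈ X k, x i ≤ ∑ i ∈ X k, y i)
    (hb : ∀ k, 1 ≤ k → k ≤ t → ∀ i ∈ X k, v (ik k) ≤ v i)
    (hc : ∀ k, 1 ≤ k → k ≤ t → ∀ i ∈ X k \ (X (k - 1) ∪ {ik k}), x i ≤ y i) :
    ∑ i, v i * x i ≤ ∑ i, v i * y i := by
  rcases Nat.eq_zero_or_pos t with ht0 | ht1
  · subst ht0
    have huniv : (Finset.univ : Finset N) = ∅ := by rw [← hXt, hX0]
    rw [show ∑ i, v i * x i = ∑ i ∈ (Finset.univ : Finset N), v i * x i from rfl,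
        show ∑ i, v i * y i = ∑ i ∈ (Finset.univ : Finset N), v i * y i from rfl,
        huniv]
    simp
  · have key : ∀ k, 1 ≤ k → k ≤ t →
        v (ik k) * (∑ i ∈ X k, (y i - x i)) ≤ ∑ i ∈ X k, v i * (y i - x i) := by
      intro k
      induction k with
      | zero => omega
      | succ m IH =>
        intro _ hkt
        have hmt : m < t := by omega
        have hsub : X m ⊆ X (m + 1) := (hchain m hmt).subset
        have hpt : ∀ i ∈ X (m + 1) \ X m,
            v (ik (m + 1)) * (y i - x i) ≤ v i * (y i - x i) := by
          intro i hi
          by_cases h : i = ik (m + 1)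
          · rw [h]
          · rw [Finset.mem_sdiff] at hi
            have hyx : x i ≤ y i := by
              apply hc (m + 1) (by omega) hkt i
              rw [Finset.mem_sdiff, Finset.mem_union, Finset.mem_singleton]
              simp only [Nat.add_sub_cancel]
              exact ⟨hi.1, by tauto⟩
            have hvv : v (ik (m + 1)) ≤ v i := hb (m + 1) (by omega) hkt i hi.1
            exact mul_le_mul_of_nonneg_right hvv (by linarith)
        rcases Nat.eq_zero_or_pos m with hm0 | hm1
        · subst hm0
          have hpt' : ∀ i ∈ X 1, v (ik 1) * (y i - x i) ≤ v i * (y i - x i) := by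
            intro i hi
            exact hpt i (by simp [hX0, hi])
          calc v (ik 1) * (∑ i ∈ X 1, (y i - x i))
              = ∑ i ∈ X 1, v (ik 1) * (y i - x i) := Finset.mul_sum _ _ _
            _ ≤ ∑ i ∈ X 1, v i * (y i - x i) := Finset.sum_le_sum hpt'
        · have IH' := IH hm1 (by omega)
          have hikm : ik m ∈ X m := (Finset.mem_sdiff.mp (hik m hm1 (by omega))).1
          have hvmono : v (ik (m + 1)) ≤ v (ik m) :=
            hb (m + 1) (by omega) hkt (ik m) (hsub hikm)
          have hDm : 0 ≤ ∑ i ∈ X m, (y i - x i) := by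
            rw [Finset.sum_sub_distrib]
            have := ha m (by omega)
            linarith
          have hsplit1 : ∑ i ∈ X (m + 1), (y i - x i)
              = ∑ i ∈ X (m + 1) \ X m, (y i - x i) + ∑ i ∈ X m, (y i - x i) :=
            (Finset.sum_sdiff hsub).symm
          have hsplit2 : ∑ i ∈ X (m + 1), v i * (y i - x i)
              = ∑ i ∈ X (m + 1) \ X m, v i * (y i - x i)
                + ∑ i ∈ X m, v i * (y i - x i) :=
            (Finset.sum_sdiff hsub).symm
          have hnew : v (ik (m + 1)) * ∑ i ∈ X (m + 1) \ X m, (y i - x i)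
              ≤ ∑ i ∈ X (m + 1) \ X m, v i * (y i - x i) := by
            rw [Finset.mul_sum]
            exact Finset.sum_le_sum hpt
          have hold : v (ik (m + 1)) * ∑ i ∈ X m, (y i - x i)
              ≤ ∑ i ∈ X m, v i * (y i - x i) := by
            calc v (ik (m + 1)) * ∑ i ∈ X m, (y i - x i)
                ≤ v (ik m) * ∑ i ∈ X m, (y i - x i) :=
                  mul_le_mul_of_nonneg_right hvmono hDm
              _ ≤ _ := IH'
          rw [hsplit1, hsplit2, mul_add]
          linarith
    have hfin := key t ht1 le_rfl
    rw [hXt, Finset.sum_sub_distrib, hsum, sub_self, mul_zero] at hfin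
    simp only [mul_sub] at hfin
    rw [Finset.sum_sub_distrib] at hfin
    linarith
end

section
/- Let (Ω, 𝔽, ℙ) be a probability space, (E, ℰ) a measurable space, and X, Y : Ω → E independent and identically distributed random variables. Let α ≥ 1 be a real number, and let F : E × E → ℝ and H : E → ℝ be measurable functions such that F(X, Y), F(Y, X) and H(X) are integrable. If F(a, b) + F(b, a) ≥ (1/α)(H(a) + H(b)) for all a, b ∈ E, then 𝔼[F(X, Y)] ≥ (1/α) 𝔼[H(X)]. (This is Lemma 4.2: if a single-sample mechanism achieves an α-approximation for every pairwise swap of realized valuations and samples, then it achieves an α-approximation in expectation; the proof uses that (X, Y) and (Y, X) have the same joint distribution.) -/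
open MeasureTheory ProbabilityTheory

/-- **Lemma 4.2.**  If `X, Y` are i.i.d. random variables and
`F (a, b) + F (b, a) ≥ (1/α) * (H a + H b)` pointwise, then
`𝔼[F (X, Y)] ≥ (1/α) * 𝔼[H X]`. -/
theorem pairwise_swap_approximation_in_expectation
    {Ω E : Type*} [MeasurableSpace Ω] [MeasurableSpace E]
    (μ : Measure Ω) [IsProbabilityMeasure μ]
    (X Y : Ω → E) (hX : Measurable X) (hY : Measurable Y)
    (hindep : IndepFun X Y μ)
    (hid : Measure.map X μ = Measure.map Y μ)
    (α : ℝ) (hα : 1 ≤ α)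
    (F : E × E → ℝ) (H : E → ℝ)
    (hF : Measurable F) (hH : Measurable H)
    (hFXY : Integrable (fun ω => F (X ω, Y ω)) μ)
    (hFYX : Integrable (fun ω => F (Y ω, X ω)) μ)
    (hHX : Integrable (fun ω => H (X ω)) μ)
    (hineq : ∀ a b : E, (1 / α) * (H a + H b) ≤ F (a, b) + F (b, a)) :
    (1 / α) * ∫ ω, H (X ω) ∂μ ≤ ∫ ω, F (X ω, Y ω) ∂μ := by
  have hindep' : IndepFun Y X μ := hindep.symm
  have hmapXY : Measure.map (fun ω => (X ω, Y ω)) μ =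
      Measure.map (fun ω => (Y ω, X ω)) μ := by
    rw [(indepFun_iff_map_prod_eq_prod_map_map hX.aemeasurable hY.aemeasurable).mp hindep,
      (indepFun_iff_map_prod_eq_prod_map_map hY.aemeasurable hX.aemeasurable).mp hindep',
      hid]
  have hswap : ∫ ω, F (X ω, Y ω) ∂μ = ∫ ω, F (Y ω, X ω) ∂μ := by
    rw [← integral_map (hX.prodMk hY).aemeasurable hF.aestronglyMeasurable,
      ← integral_map (hY.prodMk hX).aemeasurable hF.aestronglyMeasurable, hmapXY]
  have hHid : ∫ ω, H (X ω) ∂μ = ∫ ω, H (Y ω) ∂μ := by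
    rw [← integral_map hX.aemeasurable hH.aestronglyMeasurable,
      ← integral_map hY.aemeasurable hH.aestronglyMeasurable, hid]
  have hHY : Integrable (fun ω => H (Y ω)) μ := by
    have : Integrable (H ∘ Y) μ := by
      rw [← integrable_map_measure hH.aestronglyMeasurable hY.aemeasurable, ← hid,
        integrable_map_measure hH.aestronglyMeasurable hX.aemeasurable]
      exact hHX
    exact this
  have key : ∫ ω, (1 / α) * (H (X ω) + H (Y ω)) ∂μ ≤
      ∫ ω, (F (X ω, Y ω) + F (Y ω, X ω)) ∂μ :=
    integral_mono ((hHX.add hHY).const_mul _) (hFXY.add hFYX)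
      fun ω => hineq (X ω) (Y ω)
  rw [integral_const_mul, integral_add hHX hHY, integral_add hFXY hFYX, ← hHid,
    ← hswap] at key
  linarith
end

section
/- In a two-sided market with buyers N, sellers M, edges E ⊆ N × M, valuations v : N → ℝ>0, budgets B : N → ℝ≥0, and monotone submodular functions f_j on 2^{E_j ∪ {e_j}}, let ρ^a, ρ^b : M → ℝ>0 be two sellers' valuation profiles, M_a := { j ∈ M | ρ^a_j ≥ ρ^b_j } and M_b := { j ∈ M | ρ^a_j ≤ ρ^b_j }. Then OPT(M_a, ρ^a) + OPT(M_b, ρ^b) ≥ (1/2) ( OPT(M, ρ^a) + OPT(M, ρ^b) ). (Lemma 4.7.) -/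
open Finset

/-- Optimal liquid welfare of the two-sided market restricted to the sellers
in `M'`, with sellers' valuations `ρ` (sellers valuing their unsold goods via
the virtual elements `Sum.inr j`). -/
noncomputable def optLW {N M : Type*} [Fintype N] [Fintype M]
    [DecidableEq N] [DecidableEq M]
    (E : Finset (N × M)) (v : N → ℝ) (B : N → ℝ)
    (f : M → Finset ((N × M) ⊕ M) → ℝ)
    (M' : Finset M) (ρ : M → ℝ) : ℝ :=
  sSup { L : ℝ | ∃ w : ((N × M) ⊕ M) → ℝ,
    (∀ e, 0 ≤ w e) ∧
    (∀ j ∈ M', ∀ F : Finset ((N × M) ⊕ M),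
      F ⊆ ((E.filter (fun e => e.2 = j)).image Sum.inl ∪ {Sum.inr j}) →
      ∑ e ∈ F, w e ≤ f j F) ∧
    L = ∑ i, min (v i * ∑ j ∈ M',
          ∑ e ∈ E.filter (fun e => e.1 = i ∧ e.2 = j), w (Sum.inl e)) (B i)
        + ∑ j ∈ M', ρ j * w (Sum.inr j) }

/-- The feasible-value set whose supremum is `optLW`. -/
def lwSet {N M : Type*} [Fintype N] [Fintype M]
    [DecidableEq N] [DecidableEq M]
    (E : Finset (N × M)) (v : N → ℝ) (B : N → ℝ)
    (f : M → Finset ((N × M) ⊕ M) → ℝ)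
    (M' : Finset M) (ρ : M → ℝ) : Set ℝ :=
  { L : ℝ | ∃ w : ((N × M) ⊕ M) → ℝ,
    (∀ e, 0 ≤ w e) ∧
    (∀ j ∈ M', ∀ F : Finset ((N × M) ⊕ M),
      F ⊆ ((E.filter (fun e => e.2 = j)).image Sum.inl ∪ {Sum.inr j}) →
      ∑ e ∈ F, w e ≤ f j F) ∧
    L = ∑ i, min (v i * ∑ j ∈ M',
          ∑ e ∈ E.filter (fun e => e.1 = i ∧ e.2 = j), w (Sum.inl e)) (B i)
        + ∑ j ∈ M', ρ j * w (Sum.inr j) }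

lemma optLW_eq_sSup_lwSet {N M : Type*} [Fintype N] [Fintype M]
    [DecidableEq N] [DecidableEq M]
    (E : Finset (N × M)) (v : N → ℝ) (B : N → ℝ)
    (f : M → Finset ((N × M) ⊕ M) → ℝ)
    (M' : Finset M) (ρ : M → ℝ) :
    optLW E v B f M' ρ = sSup (lwSet E v B f M' ρ) := rfl

private lemma min_add_le_aux {a b c : ℝ} (ha : 0 ≤ a) (hb : 0 ≤ b) (hc : 0 ≤ c) :
    min (a + b) c ≤ min a c + min b c := by
  rcases le_total a c with h | h
  · rcases le_total b c with h' | h'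
    · have h1 : min (a + b) c ≤ a + b := min_le_left _ _
      rw [min_eq_left h, min_eq_left h']; linarith
    · have h1 : min (a + b) c ≤ c := min_le_right _ _
      have h2 : 0 ≤ min a c := le_min ha hc
      rw [min_eq_right h']; linarith
  · have h1 : min (a + b) c ≤ c := min_le_right _ _
    have h2 : 0 ≤ min b c := le_min hb hc
    rw [min_eq_right h]; linarith

lemma lwSet_nonneg {N M : Type*} [Fintype N] [Fintype M]
    [DecidableEq N] [DecidableEq M]
    (E : Finset (N × M)) (v : N → ℝ) (hv : ∀ i, 0 < v i)
    (B : N → ℝ) (hB : ∀ i, 0 ≤ B i)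
    (f : M → Finset ((N × M) ⊕ M) → ℝ)
    (M' : Finset M) (ρ : M → ℝ) (hρ : ∀ j, 0 < ρ j) :
    ∀ L ∈ lwSet E v B f M' ρ, 0 ≤ L := by
  rintro L ⟨w, hw0, -, rfl⟩
  have h1 : 0 ≤ ∑ i, min (v i * ∑ j ∈ M',
      ∑ e ∈ E.filter (fun e => e.1 = i ∧ e.2 = j), w (Sum.inl e)) (B i) :=
    Finset.sum_nonneg fun i _ => le_min
      (mul_nonneg (hv i).le (Finset.sum_nonneg fun j _ =>
        Finset.sum_nonneg fun e _ => hw0 _)) (hB i)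
  have h2 : 0 ≤ ∑ j ∈ M', ρ j * w (Sum.inr j) :=
    Finset.sum_nonneg fun j _ => mul_nonneg (hρ j).le (hw0 _)
  linarith

lemma lwSet_bddAbove {N M : Type*} [Fintype N] [Fintype M]
    [DecidableEq N] [DecidableEq M]
    (E : Finset (N × M)) (v : N → ℝ)
    (B : N → ℝ)
    (f : M → Finset ((N × M) ⊕ M) → ℝ)
    (M' : Finset M) (ρ : M → ℝ) (hρ : ∀ j, 0 < ρ j) :
    BddAbove (lwSet E v B f M' ρ) := by
  refine ⟨∑ i, B i + ∑ j ∈ M', ρ j * f j {Sum.inr j}, ?_⟩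
  rintro L ⟨w, hw0, hwf, rfl⟩
  have h1 : ∑ i, min (v i * ∑ j ∈ M',
      ∑ e ∈ E.filter (fun e => e.1 = i ∧ e.2 = j), w (Sum.inl e)) (B i) ≤ ∑ i, B i :=
    Finset.sum_le_sum fun i _ => min_le_right _ _
  have h2 : ∑ j ∈ M', ρ j * w (Sum.inr j) ≤ ∑ j ∈ M', ρ j * f j {Sum.inr j} := by
    refine Finset.sum_le_sum fun j hj => ?_
    have hc := hwf j hj {Sum.inr j} Finset.subset_union_right
    rw [Finset.sum_singleton] at hc
    exact mul_le_mul_of_nonneg_left hc (hρ j).le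
  linarith

/-- Key step: any full-market optimum with valuations `ρ` satisfying
`ρ ≤ ρa` on `M_a` and `ρ ≤ ρb` off `M_a` is at most the split sum. -/
lemma optLW_univ_le_split {N M : Type*} [Fintype N] [Fintype M]
    [DecidableEq N] [DecidableEq M]
    (E : Finset (N × M)) (v : N → ℝ) (hv : ∀ i, 0 < v i)
    (B : N → ℝ) (hB : ∀ i, 0 ≤ B i)
    (f : M → Finset ((N × M) ⊕ M) → ℝ)
    (ρa ρb ρ : M → ℝ) (hρa : ∀ j, 0 < ρa j) (hρb : ∀ j, 0 < ρb j)
    (hρ : ∀ j, 0 < ρ j)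
    (hA : ∀ j, ρb j ≤ ρa j → ρ j ≤ ρa j)
    (hBn : ∀ j, ¬ ρb j ≤ ρa j → ρ j ≤ ρb j) :
    optLW E v B f Finset.univ ρ ≤
      optLW E v B f (Finset.univ.filter (fun j => ρb j ≤ ρa j)) ρa +
      optLW E v B f (Finset.univ.filter (fun j => ρa j ≤ ρb j)) ρb := by
  classical
  set Sa : Finset M := Finset.univ.filter (fun j => ρb j ≤ ρa j) with hSadef
  set Sb : Finset M := Finset.univ.filter (fun j => ρa j ≤ ρb j) with hSbdef
  rw [optLW_eq_sSup_lwSet]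
  apply Real.sSup_le
  · rintro L ⟨w, hw0, hwf, rfl⟩
    set s : N → M → ℝ := fun i j =>
      ∑ e ∈ E.filter (fun e => e.1 = i ∧ e.2 = j), w (Sum.inl e) with hsdef
    have hs0 : ∀ i j, 0 ≤ s i j := fun i j =>
      Finset.sum_nonneg fun e _ => hw0 _
    set La : ℝ := ∑ i, min (v i * ∑ j ∈ Sa, s i j) (B i)
        + ∑ j ∈ Sa, ρa j * w (Sum.inr j) with hLadef
    set Lb : ℝ := ∑ i, min (v i * ∑ j ∈ Sb, s i j) (B i)
        + ∑ j ∈ Sb, ρb j * w (Sum.inr j) with hLbdef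
    have hLa_mem : La ∈ lwSet E v B f Sa ρa :=
      ⟨w, hw0, fun j _ => hwf j (Finset.mem_univ j), rfl⟩
    have hLb_mem : Lb ∈ lwSet E v B f Sb ρb :=
      ⟨w, hw0, fun j _ => hwf j (Finset.mem_univ j), rfl⟩
    have hLa_le : La ≤ optLW E v B f Sa ρa := by
      rw [optLW_eq_sSup_lwSet]
      exact le_csSup (lwSet_bddAbove E v B f Sa ρa hρa) hLa_mem
    have hLb_le : Lb ≤ optLW E v B f Sb ρb := by
      rw [optLW_eq_sSup_lwSet]
      exact le_csSup (lwSet_bddAbove E v B f Sb ρb hρb) hLb_mem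
    -- it remains to show L ≤ La + Lb
    have hcompl : Finset.univ.filter (fun j => ¬ ρb j ≤ ρa j) ⊆ Sb := by
      intro j hj
      rw [Finset.mem_filter] at hj
      exact Finset.mem_filter.mpr ⟨Finset.mem_univ j, (not_le.mp hj.2).le⟩
    have hbuy : ∀ i, min (v i * ∑ j, s i j) (B i) ≤
        min (v i * ∑ j ∈ Sa, s i j) (B i) + min (v i * ∑ j ∈ Sb, s i j) (B i) := by
      intro i
      have hsplit : ∑ j, s i j
          = ∑ j ∈ Sa, s i j + ∑ j ∈ Finset.univ.filter (fun j => ¬ ρb j ≤ ρa j), s i j :=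
        (Finset.sum_filter_add_sum_filter_not _ _ _).symm
      have hsub : ∑ j ∈ Finset.univ.filter (fun j => ¬ ρb j ≤ ρa j), s i j
          ≤ ∑ j ∈ Sb, s i j :=
        Finset.sum_le_sum_of_subset_of_nonneg hcompl (fun j _ _ => hs0 i j)
      have hmul : v i * ∑ j, s i j
          ≤ v i * ∑ j ∈ Sa, s i j + v i * ∑ j ∈ Sb, s i j := by
        rw [hsplit, mul_add]
        exact add_le_add le_rfl (mul_le_mul_of_nonneg_left hsub (hv i).le)
      calc min (v i * ∑ j, s i j) (B i)
          ≤ min (v i * ∑ j ∈ Sa, s i j + v i * ∑ j ∈ Sb, s i j) (B i) :=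
            min_le_min hmul le_rfl
        _ ≤ _ := min_add_le_aux
            (mul_nonneg (hv i).le (Finset.sum_nonneg fun j _ => hs0 i j))
            (mul_nonneg (hv i).le (Finset.sum_nonneg fun j _ => hs0 i j)) (hB i)
    have hsell : ∑ j, ρ j * w (Sum.inr j) ≤
        ∑ j ∈ Sa, ρa j * w (Sum.inr j) + ∑ j ∈ Sb, ρb j * w (Sum.inr j) := by
      have hsplit : ∑ j, ρ j * w (Sum.inr j)
          = ∑ j ∈ Sa, ρ j * w (Sum.inr j)
            + ∑ j ∈ Finset.univ.filter (fun j => ¬ ρb j ≤ ρa j), ρ j * w (Sum.inr j) :=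
        (Finset.sum_filter_add_sum_filter_not _ _ _).symm
      have h1 : ∑ j ∈ Sa, ρ j * w (Sum.inr j) ≤ ∑ j ∈ Sa, ρa j * w (Sum.inr j) :=
        Finset.sum_le_sum fun j hj =>
          mul_le_mul_of_nonneg_right (hA j (Finset.mem_filter.mp hj).2) (hw0 _)
      have h2 : ∑ j ∈ Finset.univ.filter (fun j => ¬ ρb j ≤ ρa j), ρ j * w (Sum.inr j)
          ≤ ∑ j ∈ Finset.univ.filter (fun j => ¬ ρb j ≤ ρa j), ρb j * w (Sum.inr j) :=
        Finset.sum_le_sum fun j hj =>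
          mul_le_mul_of_nonneg_right (hBn j (Finset.mem_filter.mp hj).2) (hw0 _)
      have h3 : ∑ j ∈ Finset.univ.filter (fun j => ¬ ρb j ≤ ρa j), ρb j * w (Sum.inr j)
          ≤ ∑ j ∈ Sb, ρb j * w (Sum.inr j) :=
        Finset.sum_le_sum_of_subset_of_nonneg hcompl
          (fun j _ _ => mul_nonneg (hρb j).le (hw0 _))
      rw [hsplit]; linarith
    have hbuysum : ∑ i, min (v i * ∑ j, s i j) (B i) ≤
        ∑ i, min (v i * ∑ j ∈ Sa, s i j) (B i)
          + ∑ i, min (v i * ∑ j ∈ Sb, s i j) (B i) := by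
      rw [← Finset.sum_add_distrib]
      exact Finset.sum_le_sum fun i _ => hbuy i
    have hL : ∑ i, min (v i * ∑ j, s i j) (B i) + ∑ j, ρ j * w (Sum.inr j)
        ≤ La + Lb := by
      rw [hLadef, hLbdef]; linarith
    exact le_trans hL (add_le_add hLa_le hLb_le)
  · have h1 : 0 ≤ optLW E v B f Sa ρa := by
      rw [optLW_eq_sSup_lwSet]
      exact Real.sSup_nonneg (lwSet_nonneg E v hv B hB f Sa ρa hρa)
    have h2 : 0 ≤ optLW E v B f Sb ρb := by
      rw [optLW_eq_sSup_lwSet]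
      exact Real.sSup_nonneg (lwSet_nonneg E v hv B hB f Sb ρb hρb)
    linarith

/-- **Lemma 4.7.**  For two sellers' valuation profiles `ρ^a, ρ^b`, with
`M_a = {j | ρ^a j ≥ ρ^b j}` and `M_b = {j | ρ^a j ≤ ρ^b j}`, one has
`OPT(M_a, ρ^a) + OPT(M_b, ρ^b) ≥ (1/2) (OPT(M, ρ^a) + OPT(M, ρ^b))`. -/
theorem optLW_split_ge_half_sum
    {N M : Type*} [Fintype N] [Fintype M] [DecidableEq N] [DecidableEq M]
    (E : Finset (N × M)) (v : N → ℝ) (hv : ∀ i, 0 < v i)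
    (B : N → ℝ) (hB : ∀ i, 0 ≤ B i)
    (f : M → Finset ((N × M) ⊕ M) → ℝ)
    (hmono : ∀ j, ∀ S T : Finset ((N × M) ⊕ M), S ⊆ T → f j S ≤ f j T)
    (hsubm : ∀ j, ∀ S T : Finset ((N × M) ⊕ M),
      f j (S ∩ T) + f j (S ∪ T) ≤ f j S + f j T)
    (hf0 : ∀ j, f j ∅ = 0)
    (ρa ρb : M → ℝ) (hρa : ∀ j, 0 < ρa j) (hρb : ∀ j, 0 < ρb j) :
    (1 / 2) * (optLW E v B f Finset.univ ρa + optLW E v B f Finset.univ ρb) ≤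
      optLW E v B f (Finset.univ.filter (fun j => ρb j ≤ ρa j)) ρa +
      optLW E v B f (Finset.univ.filter (fun j => ρa j ≤ ρb j)) ρb := by
  have h1 := optLW_univ_le_split E v hv B hB f ρa ρb ρa hρa hρb hρa
    (fun j _ => le_rfl) (fun j hj => (not_le.mp hj).le)
  have h2 := optLW_univ_le_split E v hv B hB f ρa ρb ρb hρa hρb hρb
    (fun j h => h) (fun j _ => le_rfl)
  linarith
end

section
/- Let N be a finite set, g : 2^N → ℝ monotone submodular with g(∅) = 0, x ∈ P(g), and d : N → ℝ≥0. Define g_{x,d}(S) := min_{S' ⊆ S} ( min_{S'' ⊇ S'} ( g(S'') − ∑_{i∈S''} x_i ) + ∑_{i ∈ S\S'} d_i ) for S ⊆ N. Then g_{x,d} is monotone and submodular with g_{x,d}(∅) = 0, and the remnant supply polytope { y : N → ℝ≥0 | x + y ∈ P(g) and y_i ≤ d_i for all i ∈ N } equals P(g_{x,d}) = { y : N → ℝ≥0 | ∑_{i∈S} y_i ≤ g_{x,d}(S) for all S ⊆ N }. (Theorem 3.2, restated on the ground set of buyers: the remnant supply polytope is again a polymatroid with rank function g_{x,d}.) -/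
open Finset

lemma aux_d_sum {N : Type*} [Fintype N] [DecidableEq N] (A B A' B' : Finset N)
    (hA' : A' ⊆ A) (hB' : B' ⊆ B) (d : N → ℝ) (hd : ∀ i, 0 ≤ d i) :
    ∑ i ∈ (A ∩ B) \ (A' ∩ B'), d i + ∑ i ∈ (A ∪ B) \ (A' ∪ B'), d i
      ≤ ∑ i ∈ A \ A', d i + ∑ i ∈ B \ B', d i := by
  have conv : ∀ S : Finset N, ∑ i ∈ S, d i = ∑ i ∈ Finset.univ, if i ∈ S then d i else 0 := by
    intro S
    rw [Finset.sum_ite_mem, Finset.univ_inter]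
  rw [conv ((A ∩ B) \ (A' ∩ B')), conv ((A ∪ B) \ (A' ∪ B')), conv (A \ A'), conv (B \ B'),
    ← Finset.sum_add_distrib, ← Finset.sum_add_distrib]
  apply Finset.sum_le_sum
  intro i _
  have hA'i : i ∈ A' → i ∈ A := fun h => hA' h
  have hB'i : i ∈ B' → i ∈ B := fun h => hB' h
  have hdi := hd i
  by_cases h1 : i ∈ A <;> by_cases h2 : i ∈ B <;> by_cases h3 : i ∈ A' <;>
    by_cases h4 : i ∈ B' <;>
    simp_all [Finset.mem_sdiff, Finset.mem_inter, Finset.mem_union]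

/-- **Theorem 3.2 (restated on the ground set of buyers).**  For a monotone
submodular `g` with `g ∅ = 0`, `x ∈ P(g)` and demands `d ≥ 0`, the function
`g_{x,d} S = min_{S' ⊆ S} (min_{S'' ⊇ S'} (g S'' − x(S'')) + d(S \ S'))`
is monotone submodular with `g_{x,d} ∅ = 0`, and the remnant supply polytope
`{y ≥ 0 | x + y ∈ P(g), y ≤ d}` equals the polymatroid `P(g_{x,d})`. -/
theorem remnant_supply_polytope_is_polymatroid
    {N : Type*} [Fintype N] [DecidableEq N] (g : Finset N → ℝ)
    (hmono : ∀ S T : Finset N, S ⊆ T → g S ≤ g T)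
    (hsub : ∀ S T : Finset N, g (S ∩ T) + g (S ∪ T) ≤ g S + g T)
    (h0 : g ∅ = 0)
    (x : N → ℝ) (hx0 : ∀ i, 0 ≤ x i)
    (hxP : ∀ S : Finset N, ∑ i ∈ S, x i ≤ g S)
    (d : N → ℝ) (hd : ∀ i, 0 ≤ d i)
    (gxd : Finset N → ℝ)
    (hgxd : ∀ S : Finset N, gxd S =
      S.powerset.inf' (Finset.powerset_nonempty _)
        (fun S' =>
          (Finset.univ.powerset.filter (fun S'' => S' ⊆ S'')).inf' ⟨S', by simp⟩
            (fun S'' => g S'' - ∑ i ∈ S'', x i)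
          + ∑ i ∈ S \ S', d i)) :
    (∀ S T : Finset N, S ⊆ T → gxd S ≤ gxd T) ∧
    (∀ S T : Finset N, gxd (S ∩ T) + gxd (S ∪ T) ≤ gxd S + gxd T) ∧
    gxd ∅ = 0 ∧
    (∀ y : N → ℝ,
      ((∀ i, 0 ≤ y i) ∧ (∀ S : Finset N, ∑ i ∈ S, (x i + y i) ≤ g S) ∧
        (∀ i, y i ≤ d i)) ↔
      ((∀ i, 0 ≤ y i) ∧ (∀ S : Finset N, ∑ i ∈ S, y i ≤ gxd S))) := by
  set F : Finset N → ℝ := fun S'' => g S'' - ∑ i ∈ S'', x i with hF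
  set H : Finset N → ℝ := fun S' =>
    (Finset.univ.powerset.filter (fun S'' => S' ⊆ S'')).inf' ⟨S', by simp⟩ F with hH
  have hFsub : ∀ A B : Finset N, F (A ∩ B) + F (A ∪ B) ≤ F A + F B := by
    intro A B
    have h1 := hsub A B
    have h2 : ∑ i ∈ A ∪ B, x i + ∑ i ∈ A ∩ B, x i = ∑ i ∈ A, x i + ∑ i ∈ B, x i :=
      Finset.sum_union_inter
    simp only [hF]
    linarith
  have hFnn : ∀ S'' : Finset N, 0 ≤ F S'' := fun S'' => by
    simp only [hF]; linarith [hxP S'']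
  have hH_le : ∀ S' S'' : Finset N, S' ⊆ S'' → H S' ≤ F S'' := by
    intro S' S'' hss
    exact Finset.inf'_le _ (by simp [Finset.mem_filter, hss])
  have hH_ex : ∀ S' : Finset N, ∃ S'', S' ⊆ S'' ∧ H S' = F S'' := by
    intro S'
    obtain ⟨S'', hmem, heq⟩ := Finset.exists_mem_eq_inf'
      (⟨S', by simp⟩ : ((Finset.univ.powerset.filter (fun S'' => S' ⊆ S''))).Nonempty) F
    exact ⟨S'', (Finset.mem_filter.mp hmem).2, heq⟩
  have hH_mono : ∀ A B : Finset N, A ⊆ B → H A ≤ H B := by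
    intro A B hAB
    obtain ⟨S'', hss, heq⟩ := hH_ex B
    rw [heq]
    exact hH_le _ _ (hAB.trans hss)
  have hH_nn : ∀ S' : Finset N, 0 ≤ H S' := by
    intro S'
    apply Finset.le_inf'
    intro b _
    exact hFnn b
  have hH0 : H ∅ = 0 := by
    refine le_antisymm ?_ (hH_nn ∅)
    have := hH_le ∅ ∅ (by simp)
    simpa [hF, h0] using this
  have hH_sub : ∀ A B : Finset N, H (A ∩ B) + H (A ∪ B) ≤ H A + H B := by
    intro A B
    obtain ⟨A'', hA'', heqA⟩ := hH_ex A
    obtain ⟨B'', hB'', heqB⟩ := hH_ex B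
    have h1 : H (A ∩ B) ≤ F (A'' ∩ B'') :=
      hH_le _ _ (Finset.inter_subset_inter hA'' hB'')
    have h2 : H (A ∪ B) ≤ F (A'' ∪ B'') :=
      hH_le _ _ (Finset.union_subset_union hA'' hB'')
    have := hFsub A'' B''
    rw [heqA, heqB]
    linarith
  -- basic facts about gxd
  have gxd_le : ∀ S S' : Finset N, S' ⊆ S → gxd S ≤ H S' + ∑ i ∈ S \ S', d i := by
    intro S S' hss
    rw [hgxd S]
    exact Finset.inf'_le _ (Finset.mem_powerset.mpr hss)
  have gxd_ex : ∀ S : Finset N, ∃ S', S' ⊆ S ∧ gxd S = H S' + ∑ i ∈ S \ S', d i := by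
    intro S
    rw [hgxd S]
    obtain ⟨S', hmem, heq⟩ := Finset.exists_mem_eq_inf' (Finset.powerset_nonempty S)
      (fun S' => H S' + ∑ i ∈ S \ S', d i)
    exact ⟨S', Finset.mem_powerset.mp hmem, heq⟩
  have le_gxd : ∀ (S : Finset N) (c : ℝ),
      (∀ S' : Finset N, S' ⊆ S → c ≤ H S' + ∑ i ∈ S \ S', d i) → c ≤ gxd S := by
    intro S c hc
    rw [hgxd S]
    apply Finset.le_inf'
    intro S' hmem
    exact hc S' (Finset.mem_powerset.mp hmem)
  -- monotone
  have hmono' : ∀ S T : Finset N, S ⊆ T → gxd S ≤ gxd T := by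
    intro S T hST
    obtain ⟨T', hT', heq⟩ := gxd_ex T
    have h1 : gxd S ≤ H (T' ∩ S) + ∑ i ∈ S \ (T' ∩ S), d i :=
      gxd_le S (T' ∩ S) inter_subset_right
    have h2 : H (T' ∩ S) ≤ H T' := hH_mono _ _ inter_subset_left
    have h3 : ∑ i ∈ S \ (T' ∩ S), d i ≤ ∑ i ∈ T \ T', d i := by
      apply Finset.sum_le_sum_of_subset_of_nonneg
      · intro i hi
        simp only [Finset.mem_sdiff, Finset.mem_inter, not_and] at hi ⊢
        exact ⟨hST hi.1, fun h => (hi.2 h hi.1).elim⟩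
      · intro i _ _; exact hd i
    rw [heq]; linarith
  -- submodular
  have hsub' : ∀ S T : Finset N, gxd (S ∩ T) + gxd (S ∪ T) ≤ gxd S + gxd T := by
    intro A B
    obtain ⟨A', hA', heqA⟩ := gxd_ex A
    obtain ⟨B', hB', heqB⟩ := gxd_ex B
    have h1 : gxd (A ∩ B) ≤ H (A' ∩ B') + ∑ i ∈ (A ∩ B) \ (A' ∩ B'), d i :=
      gxd_le _ _ (Finset.inter_subset_inter hA' hB')
    have h2 : gxd (A ∪ B) ≤ H (A' ∪ B') + ∑ i ∈ (A ∪ B) \ (A' ∪ B'), d i :=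
      gxd_le _ _ (Finset.union_subset_union hA' hB')
    have hHs := hH_sub A' B'
    have hdsum := aux_d_sum A B A' B' hA' hB' d hd
    rw [heqA, heqB]
    linarith
  -- empty set
  have h0' : gxd ∅ = 0 := by
    obtain ⟨S', hS', heq⟩ := gxd_ex ∅
    rw [Finset.subset_empty.mp hS'] at heq
    simp [hH0] at heq
    exact heq
  refine ⟨hmono', hsub', h0', ?_⟩
  intro y
  constructor
  · rintro ⟨hy0, hyP, hyd⟩
    refine ⟨hy0, fun S => ?_⟩
    apply le_gxd
    intro S' hS'
    obtain ⟨S'', hss, heq⟩ := hH_ex S'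
    rw [heq]
    have e1 : ∑ i ∈ S, y i = ∑ i ∈ S', y i + ∑ i ∈ S \ S', y i := by
      rw [← Finset.sum_union (Finset.disjoint_sdiff), Finset.union_sdiff_of_subset hS']
    have e2 : ∑ i ∈ S', y i ≤ ∑ i ∈ S'', y i :=
      Finset.sum_le_sum_of_subset_of_nonneg hss (fun i _ _ => hy0 i)
    have e3 : ∑ i ∈ S \ S', y i ≤ ∑ i ∈ S \ S', d i :=
      Finset.sum_le_sum (fun i _ => hyd i)
    have e4 : ∑ i ∈ S'', x i + ∑ i ∈ S'', y i ≤ g S'' := by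
      have := hyP S''
      rwa [Finset.sum_add_distrib] at this
    simp only [hF]
    linarith
  · rintro ⟨hy0, hyP⟩
    refine ⟨hy0, fun S => ?_, fun i => ?_⟩
    · have h1 := hyP S
      have h2 : gxd S ≤ g S - ∑ i ∈ S, x i := by
        have h4 := gxd_le S S le_rfl
        have h3 : H S ≤ F S := hH_le S S le_rfl
        simp only [Finset.sdiff_self, Finset.sum_empty, add_zero] at h4
        simp only [hF] at h3
        linarith
      rw [Finset.sum_add_distrib]
      linarith
    · have h1 := hyP {i}
      simp only [Finset.sum_singleton] at h1
      have h2 : gxd {i} ≤ H ∅ + ∑ j ∈ ({i} : Finset N) \ ∅, d j :=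
        gxd_le {i} ∅ (Finset.empty_subset _)
      simp [hH0] at h2
      linarith
end

section
/- Let S be a finite set, c : 2^S → ℝ an arbitrary set function, d : S → ℝ≥0, l ∈ S, and 0 ≤ t ≤ d_l. Let d' : S → ℝ≥0 agree with d on S\{l} and satisfy d'_l = t. For e : S → ℝ≥0 and T ⊆ S, define G_e(T) := min_{T' ⊆ T} ( c(T') + ∑_{i ∈ T\T'} e_i ). Then G_{d'}(S) = min( G_d(S), G_d(S\{l}) + t ). (Demand-update step in the proof of Proposition 3.6: with c(S') = g(S') − x(S'), decreasing the demand of buyer l from d_l to d'_l updates the remnant rank formula to the minimum of its old value and G_d(S\{l}) + d'_l.) -/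
open Finset

/-- **Demand-update step in the proof of Proposition 3.6.**  With
`G_e(T) = min_{T' ⊆ T} (c T' + ∑_{i ∈ T \ T'} e i)`, decreasing the demand of
`l` from `d l` to `t` gives `G_{d'}(S) = min (G_d(S)) (G_d(S \ {l}) + t)`. -/
theorem demand_update_remnant_rank
    {S : Type*} [Fintype S] [DecidableEq S]
    (c : Finset S → ℝ) (d d' : S → ℝ)
    (hd : ∀ i, 0 ≤ d i) (hd' : ∀ i, 0 ≤ d' i)
    (l : S) (t : ℝ) (ht0 : 0 ≤ t) (ht : t ≤ d l)
    (hd'ne : ∀ i, i ≠ l → d' i = d i) (hd'l : d' l = t)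
    (G : (S → ℝ) → Finset S → ℝ)
    (hG : ∀ (e : S → ℝ) (T : Finset S), G e T =
      T.powerset.inf' (Finset.powerset_nonempty _)
        (fun T' => c T' + ∑ i ∈ T \ T', e i)) :
    G d' Finset.univ =
      min (G d Finset.univ) (G d (Finset.univ \ {l}) + t) := by
  classical
  have hsum : ∀ T' : Finset S, l ∉ T' →
      ∑ i ∈ univ \ T', d' i = t + ∑ i ∈ (univ \ {l}) \ T', d i := by
    intro T' hl
    have hset : univ \ T' = insert l ((univ \ {l}) \ T') := by
      ext i
      simp only [mem_sdiff, mem_univ, true_and, mem_insert, mem_singleton]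
      constructor
      · intro hi
        by_cases h : i = l
        · exact Or.inl h
        · exact Or.inr ⟨h, hi⟩
      · rintro (rfl | ⟨_, hi⟩)
        · exact hl
        · exact hi
    have hlmem : l ∉ (univ \ {l}) \ T' := by simp
    rw [hset, Finset.sum_insert hlmem, hd'l]
    congr 1
    refine Finset.sum_congr rfl fun i hi => ?_
    apply hd'ne
    simp only [mem_sdiff, mem_univ, true_and, mem_singleton] at hi
    exact hi.1
  rw [hG, hG, hG]
  apply le_antisymm
  · apply le_min
    · apply Finset.le_inf'
      intro T' hT'
      refine Finset.inf'_le_of_le _ hT' ?_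
      gcongr with i hi
      by_cases h : i = l
      · subst h; rw [hd'l]; exact ht
      · rw [hd'ne i h]
    · obtain ⟨T', hT', hEq⟩ := Finset.exists_mem_eq_inf'
        (Finset.powerset_nonempty (univ \ {l}))
        (fun T'' => c T'' + ∑ i ∈ (univ \ {l}) \ T'', d i)
      rw [hEq]
      have hT's : T' ⊆ univ \ {l} := Finset.mem_powerset.mp hT'
      have hl : l ∉ T' := fun h => by
        have := hT's h
        simp at this
      refine Finset.inf'_le_of_le _ (Finset.mem_powerset.mpr (subset_univ T')) ?_
      rw [hsum T' hl]; ring_nf; rfl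
  · apply Finset.le_inf'
    intro T' hT'
    by_cases hl : l ∈ T'
    · refine le_trans (min_le_left _ _) ?_
      refine Finset.inf'_le_of_le _ hT' ?_
      have : ∑ i ∈ univ \ T', d i = ∑ i ∈ univ \ T', d' i := by
        refine Finset.sum_congr rfl fun i hi => ?_
        rw [hd'ne]
        rintro rfl
        exact (mem_sdiff.mp hi).2 hl
      simp only [this, le_refl]
    · refine le_trans (min_le_right _ _) ?_
      have hT's : T' ∈ (univ \ {l}).powerset := by
        rw [mem_powerset]
        intro i hi
        simp only [mem_sdiff, mem_univ, true_and, mem_singleton]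
        rintro rfl
        exact hl hi
      have h1 : (univ \ {l}).powerset.inf' (Finset.powerset_nonempty _)
          (fun T'' => c T'' + ∑ i ∈ (univ \ {l}) \ T'', d i)
          ≤ c T' + ∑ i ∈ (univ \ {l}) \ T', d i := Finset.inf'_le _ hT's
      have := hsum T' hl
      linarith
end
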